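/- arXiv:1912.13078 — 3 statements merged into one kernel-verified Lean document; each statement's English description precedes it below -/
import Mathlib

section
/- Fix $\epsilon,\beta \in (0,1)$ and positive integers $n_1, n_2, m_1, m_2$ with $m_2 \geq n_2+1$. If $N \geq \frac{2}{\epsilon}\log\frac{1}{\beta} + \frac{4n_1 n_2}{\epsilon}\big(\log(\frac{m_2}{n_2+1})+1\big) + \frac{2n_1}{\epsilon}\big(\log(\frac{m_1}{n_1}+2) + \log\frac{2}{\epsilon} + 1\big) + 2n_1$, then $\binom{N}{n_1}\frac{1}{n_1!}(2n_1+m_1)^{n_1}\Big(\frac{m_2^{n_2+1}}{(n_2+1)!}\Big)^{2n_1}(1-\epsilon)^{N-n_1} \leq \beta$. -/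
/-!
Take logarithms. Since `k ^ k / k! ≤ exp k`, a power over a factorial satisfies
`log (x ^ k / k!) ≤ k (log (x / k) + 1)`; this bounds `C(N, n₁) ≤ N ^ n₁ / n₁!`,
`(2n₁ + m₁) ^ n₁ / n₁!` and `m₂ ^ (n₂+1) / (n₂+1)!`. For the last factor use
`1 - ε ≤ exp (-(ε + ε²/4))`: the surplus rate `ε²/4` pays for `N ^ n₁`, since `log y ≤ y - 1` gives
`n₁ log (N / n₁) ≤ 2 n₁ log (2 / ε) + ε² N / 4 - n₁`. The whole of `ε N` is then left to beat the
terms not depending on `N`, which is what the threshold on `N` provides; giving up half of it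
(bounding `n₁ log N` by `ε N / 2` instead) would not cover `2 n₁ (n₂ + 1) (log (m₂ / (n₂ + 1)) + 1)`
when `n₂ = 1`.
-/

open Real
open scoped Nat

lemma log_pow_div_factorial_le {x : ℝ} (hx : 0 < x) (k : ℕ) :
    log (x ^ k / k !) ≤ k * (log (x / k) + 1) := by
  rcases k.eq_zero_or_pos with rfl | hk
  · simp
  have hk' : (0 : ℝ) < k := by exact_mod_cast hk
  calc log (x ^ k / k !) = log ((x / k) ^ k * ((k : ℝ) ^ k / k !)) := by
        rw [div_pow]; field_simp
    _ ≤ log ((x / k) ^ k * exp k) := by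
        gcongr
        exact pow_div_factorial_le_exp _ hk'.le k
    _ = k * (log (x / k) + 1) := by
        rw [log_mul (by positivity) (exp_pos _).ne', log_pow, log_exp]; ring

lemma log_choose_le {N k : ℕ} (hkN : k ≤ N) :
    log (N.choose k) ≤ k * (log (N / k) + 1) := by
  rcases k.eq_zero_or_pos with rfl | hk
  · simp
  have hN : (0 : ℝ) < N := by exact_mod_cast hk.trans_le hkN
  calc log (N.choose k) ≤ log ((N : ℝ) ^ k / k !) :=
        log_le_log (by exact_mod_cast Nat.choose_pos hkN) (Nat.choose_le_pow_div k N)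
    _ ≤ k * (log (N / k) + 1) := log_pow_div_factorial_le hN k

lemma log_one_sub_le {ε : ℝ} (h0 : 0 ≤ ε) (h1 : ε < 1) : log (1 - ε) ≤ -(ε + ε ^ 2 / 4) := by
  rw [log_le_iff_le_exp (by linarith)]
  set e := ε + ε ^ 2 / 4 with he
  -- `e - e ^ 2 / 4 ≤ ε`, so `1 - ε ≤ (1 - e / 2) ^ 2 ≤ exp (-(e / 2)) ^ 2`.
  calc 1 - ε ≤ (1 - e / 2) ^ 2 := by nlinarith [pow_nonneg h0 3, pow_nonneg h0 4]
    _ ≤ exp (-(e / 2)) ^ 2 := by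
        gcongr
        · nlinarith
        · linarith [add_one_le_exp (-(e / 2))]
    _ = exp (-e) := by rw [← exp_nat_mul]; ring_nf

lemma mul_log_div_le {a c x : ℝ} (ha : 0 < a) (hc : 0 < c) (hx : 0 < x) :
    c * log (x / c) ≤ c * log a⁻¹ + a * x - c := by
  have key : log (x / c) - log a⁻¹ ≤ a * x / c - 1 := by
    rw [← log_div (by positivity) (by positivity)]
    convert log_le_sub_one_of_pos (show 0 < a * x / c by positivity) using 2
    field_simp
  have := mul_le_mul_of_nonneg_left key hc.le
  rw [mul_sub, mul_sub, mul_div_cancel₀ _ hc.ne'] at this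
  linarith

lemma log_choose_mul_one_sub_pow_le {ε : ℝ} (hε0 : 0 < ε) (hε1 : ε < 1) {N k : ℕ} (hk : 0 < k)
    (hkN : k ≤ N) :
    log (N.choose k * (1 - ε) ^ (N - k)) ≤ 2 * k * log (2 / ε) + k * (ε + ε ^ 2 / 4) - ε * N := by
  have hk' : (0 : ℝ) < k := by exact_mod_cast hk
  have hkN' : (k : ℝ) ≤ N := by exact_mod_cast hkN
  have hchoose := log_choose_le hkN
  have hbalance := mul_log_div_le (a := ε ^ 2 / 4) (by positivity) hk' (hk'.trans_le hkN')
  rw [show (ε ^ 2 / 4)⁻¹ = (2 / ε) ^ 2 by field_simp; norm_num, log_pow] at hbalance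
  have hq := mul_le_mul_of_nonneg_left (log_one_sub_le hε0.le hε1) (sub_nonneg.2 hkN')
  have hC : (0 : ℝ) < N.choose k := by exact_mod_cast Nat.choose_pos hkN
  have hq0 : 0 < 1 - ε := by linarith
  rw [log_mul hC.ne' (pow_pos hq0 _).ne', log_pow, Nat.cast_sub hkN]
  push_cast at hbalance
  linarith

theorem saa_sample_size_estimate_general
    (ε β : ℝ) (hε : ε ∈ Set.Ioo (0 : ℝ) 1) (hβ : β ∈ Set.Ioo (0 : ℝ) 1)
    (n1 n2 m1 m2 : ℕ) (hn1 : 0 < n1) (hn2 : 0 < n2)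
    (hm2 : n2 + 1 ≤ m2) (N : ℕ)
    (hN : (2 / ε) * Real.log (1 / β)
        + (4 * n1 * n2 / ε) * (Real.log ((m2 : ℝ) / (n2 + 1)) + 1)
        + (2 * n1 / ε) * (Real.log ((m1 : ℝ) / n1 + 2) + Real.log (2 / ε) + 1)
        + 2 * n1 ≤ (N : ℝ)) :
    (N.choose n1 : ℝ) * (1 / (n1.factorial : ℝ)) * (2 * n1 + m1 : ℝ) ^ n1 *
        ((m2 : ℝ) ^ (n2 + 1) / ((n2 + 1).factorial : ℝ)) ^ (2 * n1) *
        (1 - ε) ^ (N - n1) ≤ β := by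
  obtain ⟨hε0, hε1⟩ := hε
  obtain ⟨hβ0, hβ1⟩ := hβ
  rcases lt_or_ge N n1 with hNn | hnN
  · simp [Nat.choose_eq_zero_of_lt hNn, hβ0.le]
  have hn : (0 : ℝ) < n1 := by exact_mod_cast hn1
  have hm2pos : 0 < m2 := by omega
  have hsample := log_choose_mul_one_sub_pow_le hε0 hε1 hn1 hnN
  have hP1 : log ((2 * n1 + m1 : ℝ) ^ n1 / n1 !) ≤ n1 * (log (m1 / n1 + 2) + 1) := by
    convert log_pow_div_factorial_le (x := 2 * n1 + m1) (by positivity) n1 using 4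
    field_simp
    ring
  have hP2 := log_pow_div_factorial_le (x := m2) (by positivity) (n2 + 1)
  push_cast at hP2
  rw [one_div, log_inv] at hN
  have hb : log β ≤ 0 := log_nonpos hβ0.le hβ1.le
  have hL1 : 0 ≤ log (m1 / n1 + 2) :=
    log_nonneg (by linarith [div_nonneg m1.cast_nonneg hn.le])
  have hL2 : 0 ≤ log (m2 / (n2 + 1)) :=
    log_nonneg ((one_le_div (by positivity)).mpr (by exact_mod_cast hm2))
  -- Freeze the logarithms so that `field_simp` only clears the `ε` in the denominators.
  generalize log (m1 / n1 + 2) = L1, log (m2 / (n2 + 1)) = L2,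
    log (2 / ε) = Le at *
  field_simp at hN
  calc _ = (N.choose n1 * (1 - ε) ^ (N - n1)) * ((2 * n1 + m1 : ℝ) ^ n1 / n1 !) *
        ((m2 : ℝ) ^ (n2 + 1) / (n2 + 1)!) ^ (2 * n1) := by ring
    _ ≤ β := by
      have hC : (0 : ℝ) < N.choose n1 * (1 - ε) ^ (N - n1) :=
        mul_pos (by exact_mod_cast Nat.choose_pos hnN) (pow_pos (by linarith) _)
      rw [← log_le_log_iff (by positivity) hβ0, log_mul (by positivity) (by positivity),
        log_mul (by positivity) (by positivity), log_pow]
      push_cast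
      have hn2' : (0 : ℝ) ≤ n2 - 1 := sub_nonneg.2 (by exact_mod_cast hn2)
      nlinarith [mul_le_mul_of_nonneg_left hP2 hn.le, mul_nonneg hn.le hL1,
        mul_nonneg (mul_nonneg hn.le hn2') (by linarith : 0 ≤ L2 + 1),
        mul_nonneg hn.le (mul_nonneg hε0.le (sub_nonneg.2 hε1.le))]

/-- Sample size estimate (Corollary 1, analytic part): if `N` is at least the stated
threshold, then
`C(N,n₁) (1/n₁!) (2n₁+m₁)^{n₁} (m₂^{n₂+1}/(n₂+1)!)^{2n₁} (1-ε)^{N-n₁} ≤ β`. -/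
theorem saa_sample_size_estimate
    (ε β : ℝ) (hε : ε ∈ Set.Ioo (0 : ℝ) 1) (hβ : β ∈ Set.Ioo (0 : ℝ) 1)
    (n1 n2 m1 m2 : ℕ) (hn1 : 0 < n1) (hn2 : 0 < n2) (hm1 : 0 < m1)
    (hm2 : n2 + 1 ≤ m2) (N : ℕ)
    (hN : (2 / ε) * Real.log (1 / β)
        + (4 * n1 * n2 / ε) * (Real.log ((m2 : ℝ) / (n2 + 1)) + 1)
        + (2 * n1 / ε) * (Real.log ((m1 : ℝ) / n1 + 2) + Real.log (2 / ε) + 1)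
        + 2 * n1 ≤ (N : ℝ)) :
    (N.choose n1 : ℝ) * (1 / (n1.factorial : ℝ)) * (2 * n1 + m1 : ℝ) ^ n1 *
        ((m2 : ℝ) ^ (n2 + 1) / ((n2 + 1).factorial : ℝ)) ^ (2 * n1) *
        (1 - ε) ^ (N - n1) ≤ β :=
  saa_sample_size_estimate_general ε β hε hβ n1 n2 m1 m2 hn1 hn2 hm2 N hN
end

section
/- Let $\bm{\xi} = (\bm{\xi}_1,\dots,\bm{\xi}_d)$ be a random vector whose support $\Xi$ equals the product $\prod_{i=1}^d \Xi_i$ of the supports of its components, each $\Xi_i$ bounded with diameter at most $D$. Let $H : X \times \Xi \to \mathbb{R}$ be $L$-Lipschitz in $\xi$ under the infinity norm, uniformly in $x$, and let $\gamma > 0$. For an i.i.d. sample $\xi^1,\dots,\xi^N$, define the padded feasible set $\hat X_{N,\gamma} = \{x \in X : H(x, (\xi^{i_1}_1,\dots,\xi^{i_d}_d)) + \gamma \leq 0 \ \forall (i_1,\dots,i_d) \in [N]^d\}$. Then $\mathbb{P}^N\big(\hat X_{N,\gamma} \subseteq \{x : H(x,\xi) \leq 0 \ \forall \xi \in \Xi\}\big)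 \geq 1 - (dDL/\gamma)(1-\eta(\gamma))^N$, where $\eta(\gamma) = \min_{i,k} \mathbb{P}(\bm{\xi}_i \in [\bar\xi_i^k - \gamma/2L, \bar\xi_i^k + \gamma/2L])$ over a $(\gamma/2L)$-net $\{\bar\xi_i^k\}_{k \in [M_i]}$ of each $\Xi_i$ with $M_i \leq DL/\gamma$ and all net intervals having positive probability. -/
/-!
On the event that, for every coordinate `i` and every cell `k` of the net of `Ξᵢ`, some sample
has its `i`-th coordinate in that cell, every `v ∈ ∏ᵢ Ξᵢ` lies within `2 · γ/(2L) = γ/L` (in the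
sup norm) of a mixed scenario `(ξ^{J 1}_1, …, ξ^{J d}_d)`; the Lipschitz bound then turns the
padding `γ` into feasibility at `v`. By independence a fixed cell `(i, k)` is missed by all `N`
samples with probability `(1 - P(ξᵢ ∈ cell))^N ≤ (1 - η)^N`, and a union bound over the at most
`d · DL/γ` cells bounds the probability of the complementary event.
-/

open MeasureTheory ProbabilityTheory Set
open scoped ENNReal

lemma nonpos_of_add_nonpos_of_abs_sub_le {E : Type*} [SeminormedAddCommGroup E] {f : E → ℝ}
    {L γ : ℝ} (hf : ∀ a b, |f a - f b| ≤ L * ‖a - b‖) {a b : E} (hab : L * ‖a - b‖ ≤ γ)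
    (hb : f b + γ ≤ 0) : f a ≤ 0 := by
  linarith [(abs_le.1 (hf a b)).2]

lemma one_sub_measure_compl_le {Ω : Type*} [MeasurableSpace Ω] (μ : Measure Ω)
    [IsProbabilityMeasure μ] (s : Set Ω) : 1 - μ sᶜ ≤ μ s := by
  rw [tsub_le_iff_right, ← measure_univ (μ := μ), ← union_compl_self s]
  exact measure_union_le s sᶜ

lemma sum_natCast_le_ofReal_card_mul {ι : Type*} [Fintype ι] {M : ι → ℕ} {c : ℝ}
    (hM : ∀ i, (M i : ℝ) ≤ c) : ∑ i, (M i : ℝ≥0∞) ≤ ENNReal.ofReal (Fintype.card ι * c) := by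
  rw [← Nat.cast_sum, ← ENNReal.ofReal_natCast]
  refine ENNReal.ofReal_le_ofReal ?_
  push_cast
  simpa using Finset.sum_le_card_nsmul Finset.univ _ c fun i _ => hM i

lemma measure_iInter_preimage_eq_pow {Ω E n : Type*} [MeasurableSpace Ω] [MeasurableSpace E]
    [Fintype n] {μ : Measure Ω} {X : n → Ω → E} {Y : Ω → E} (hX : ∀ j, Measurable (X j))
    (hY : Measurable Y) (hind : iIndepFun X μ) (hident : ∀ j, μ.map (X j) = μ.map Y)
    {S : Set E} (hS : MeasurableSet S) :
    μ (⋂ j, X j ⁻¹' S) = μ (Y ⁻¹' S) ^ Fintype.card n := by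
  rw [hind.meas_iInter fun j => ⟨S, hS, rfl⟩]
  simp_rw [← Measure.map_apply (hX _) hS, hident, Measure.map_apply hY hS]
  simp

section MixedScenarios

variable {Ω ι n : Type*} {κ : ι → Type*}

def allCellsHit (X : n → Ω → ι → ℝ) (I : (i : ι) → κ i → Set ℝ) : Set Ω :=
  {ω | ∀ i k, ∃ j, X j ω i ∈ I i k}

variable [Fintype ι] {X : n → Ω → ι → ℝ} {I : (i : ι) → κ i → Set ℝ}

lemma exists_mixed_scenario_near {δ : ℝ} (hδ : 0 ≤ δ)
    (hI : ∀ i k, ∀ x ∈ I i k, ∀ y ∈ I i k, |x - y| ≤ δ) {ω : Ω} (hω : ω ∈ allCellsHit X I)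
    {v : ι → ℝ} (hv : ∀ i, ∃ k, v i ∈ I i k) :
    ∃ J : ι → n, ‖v - fun i => X (J i) ω i‖ ≤ δ := by
  choose k hk using hv
  choose J hJ using fun i => hω i (k i)
  exact ⟨J, (pi_norm_le_iff_of_nonneg hδ).2 fun i => hI i (k i) _ (hk i) _ (hJ i)⟩

lemma allCellsHit_subset_robust_feasible {V : Type*} {H : V → (ι → ℝ) → ℝ} {L γ δ : ℝ}
    (hLip : ∀ x a b, |H x a - H x b| ≤ L * ‖a - b‖) (hL : 0 ≤ L) (hδ : 0 ≤ δ)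
    (hLδ : L * δ ≤ γ) (hI : ∀ i k, ∀ x ∈ I i k, ∀ y ∈ I i k, |x - y| ≤ δ)
    {Ξ : ι → Set ℝ} (hcover : ∀ i, Ξ i ⊆ ⋃ k, I i k) :
    allCellsHit X I ⊆ {ω | ∀ x : V, (∀ J : ι → n, H x (fun i => X (J i) ω i) + γ ≤ 0) →
      ∀ v : ι → ℝ, (∀ i, v i ∈ Ξ i) → H x v ≤ 0} := by
  intro ω hω x hpad v hv
  obtain ⟨J, hJ⟩ :=
    exists_mixed_scenario_near hδ hI hω fun i => mem_iUnion.1 (hcover i (hv i))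
  exact nonpos_of_add_nonpos_of_abs_sub_le (hLip x)
    ((mul_le_mul_of_nonneg_left hJ hL).trans hLδ) (hpad J)

lemma measure_compl_allCellsHit_le [MeasurableSpace Ω] {μ : Measure Ω} [Fintype n]
    [∀ i, Fintype (κ i)] {ξ : Ω → ι → ℝ} (hX : ∀ j, Measurable (X j)) (hξ : Measurable ξ)
    (hind : iIndepFun X μ) (hident : ∀ j, μ.map (X j) = μ.map ξ)
    (hI : ∀ i k, MeasurableSet (I i k)) :
    μ (allCellsHit X I)ᶜ ≤ ∑ i, ∑ k, μ {ω | ξ ω i ∉ I i k} ^ Fintype.card n := by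
  have hmiss : (allCellsHit X I)ᶜ = ⋃ i, ⋃ k, ⋂ j, X j ⁻¹' {v | v i ∉ I i k} := by
    ext ω
    simp [allCellsHit]
  rw [hmiss]
  refine (measure_iUnion_fintype_le _ _).trans (Finset.sum_le_sum fun i _ => ?_)
  refine (measure_iUnion_fintype_le _ _).trans (Finset.sum_le_sum fun k _ => ?_)
  exact (measure_iInter_preimage_eq_pow hX hξ hind hident
    ((measurable_pi_apply i) (hI i k)).compl).le

end MixedScenarios

theorem padded_saa_product_support_general
    {Ω V : Type*} [MeasurableSpace Ω] (μ : Measure Ω) [IsProbabilityMeasure μ]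
    (d : ℕ) (ξ : Ω → (Fin d → ℝ)) (hξ : Measurable ξ)
    (Ξi : Fin d → Set ℝ)
    (D L γ : ℝ) (hL : 0 < L) (hγ : 0 < γ)
    (H : V → (Fin d → ℝ) → ℝ)
    (hLip : ∀ (x : V) (a b : Fin d → ℝ), |H x a - H x b| ≤ L * ‖a - b‖)
    (N : ℕ) (ξj : Fin N → Ω → (Fin d → ℝ)) (hmeas : ∀ j, Measurable (ξj j))
    (hindep : iIndepFun ξj μ)
    (hident : ∀ j, Measure.map (ξj j) μ = Measure.map ξ μ)
    (M : Fin d → ℕ) (net : (i : Fin d) → Fin (M i) → ℝ)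
    (hM : ∀ i, (M i : ℝ) ≤ D * L / γ)
    (hcover : ∀ i, Ξi i ⊆ ⋃ k, Set.Icc (net i k - γ / (2 * L)) (net i k + γ / (2 * L)))
    (η : ℝ≥0∞)
    (hη : η = ⨅ i, ⨅ k,
      μ {ω | ξ ω i ∈ Set.Icc (net i k - γ / (2 * L)) (net i k + γ / (2 * L))}) :
    1 - ENNReal.ofReal (d * D * L / γ) * (1 - η) ^ N ≤
      μ {ω | ∀ x : V,
        (∀ J : Fin d → Fin N, H x (fun i => ξj (J i) ω i) + γ ≤ 0) →
          ∀ v : Fin d → ℝ, (∀ i, v i ∈ Ξi i) → H x v ≤ 0} := by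
  set I : (i : Fin d) → Fin (M i) → Set ℝ :=
    fun i k => Icc (net i k - γ / (2 * L)) (net i k + γ / (2 * L))
  have hwidth : ∀ i k, ∀ x ∈ I i k, ∀ y ∈ I i k, |x - y| ≤ γ / L := fun i k x hx y hy =>
    (Real.dist_le_of_mem_Icc hx hy).trans_eq (by field_simp; ring)
  have hgood := allCellsHit_subset_robust_feasible (X := ξj) hLip hL.le (by positivity)
    (mul_div_cancel₀ γ hL.ne').le hwidth hcover
  have hmiss : ∀ i k, μ {ω | ξ ω i ∉ I i k} ≤ 1 - η := fun i k => by
    have hcell : MeasurableSet {ω | ξ ω i ∈ I i k} := hξ (measurable_pi_apply i measurableSet_Icc)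
    rw [← compl_ofPred, prob_compl_eq_one_sub hcell, hη]
    exact tsub_le_tsub_left ((iInf_le _ i).trans (iInf_le _ k)) 1
  have hbad : μ (allCellsHit ξj I)ᶜ ≤ ENNReal.ofReal (d * D * L / γ) * (1 - η) ^ N :=
    calc μ (allCellsHit ξj I)ᶜ
        ≤ ∑ i, ∑ k : Fin (M i), μ {ω | ξ ω i ∉ I i k} ^ N := by
          simpa only [Fintype.card_fin] using measure_compl_allCellsHit_le (I := I) hmeas hξ
            hindep hident fun i k => measurableSet_Icc
      _ ≤ ∑ i, ∑ _k : Fin (M i), (1 - η) ^ N := by gcongr with i _ k _; exact hmiss i k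
      _ = (∑ i, (M i : ℝ≥0∞)) * (1 - η) ^ N := by simp [Finset.sum_mul]
      _ ≤ ENNReal.ofReal (d * D * L / γ) * (1 - η) ^ N := by
          gcongr
          refine (sum_natCast_le_ofReal_card_mul hM).trans_eq ?_
          rw [Fintype.card_fin, mul_div_assoc, mul_div_assoc, mul_assoc]
  calc 1 - ENNReal.ofReal (d * D * L / γ) * (1 - η) ^ N
      ≤ 1 - μ (allCellsHit ξj I)ᶜ := tsub_le_tsub_left hbad 1
    _ ≤ μ (allCellsHit ξj I) := one_sub_measure_compl_le μ _
    _ ≤ _ := measure_mono hgood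

/-- Theorem 6 (padded SAA for product-of-marginals support): with probability at least
`1 - (dDL/γ)(1-η(γ))^N` over the sample, every solution feasible for the `γ`-padded SAA
problem (over all mixed scenarios) is feasible for every `ξ` in the support
`Ξ = ∏ᵢ Ξᵢ`. -/
theorem padded_saa_product_support
    {Ω V : Type*} [MeasurableSpace Ω] (μ : Measure Ω) [IsProbabilityMeasure μ]
    (d : ℕ) (ξ : Ω → (Fin d → ℝ)) (hξ : Measurable ξ)
    (Ξi : Fin d → Set ℝ) (hbdd : ∀ i, Bornology.IsBounded (Ξi i))
    (D L γ : ℝ) (hD : ∀ i, Metric.diam (Ξi i) ≤ D) (hL : 0 < L) (hγ : 0 < γ)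
    (hsupp : ∀ᵐ ω ∂μ, ∀ i, ξ ω i ∈ Ξi i)
    (H : V → (Fin d → ℝ) → ℝ)
    (hLip : ∀ (x : V) (a b : Fin d → ℝ), |H x a - H x b| ≤ L * ‖a - b‖)
    (N : ℕ) (ξj : Fin N → Ω → (Fin d → ℝ)) (hmeas : ∀ j, Measurable (ξj j))
    (hindep : iIndepFun ξj μ)
    (hident : ∀ j, Measure.map (ξj j) μ = Measure.map ξ μ)
    (M : Fin d → ℕ) (net : (i : Fin d) → Fin (M i) → ℝ)
    (hM : ∀ i, (M i : ℝ) ≤ D * L / γ)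
    (hcover : ∀ i, Ξi i ⊆ ⋃ k, Set.Icc (net i k - γ / (2 * L)) (net i k + γ / (2 * L)))
    (hpos : ∀ i k,
      0 < μ {ω | ξ ω i ∈ Set.Icc (net i k - γ / (2 * L)) (net i k + γ / (2 * L))})
    (η : ℝ≥0∞)
    (hη : η = ⨅ i, ⨅ k,
      μ {ω | ξ ω i ∈ Set.Icc (net i k - γ / (2 * L)) (net i k + γ / (2 * L))}) :
    1 - ENNReal.ofReal (d * D * L / γ) * (1 - η) ^ N ≤
      μ {ω | ∀ x : V,
        (∀ J : Fin d → Fin N, H x (fun i => ξj (J i) ω i) + γ ≤ 0) →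
          ∀ v : Fin d → ℝ, (∀ i, v i ∈ Ξi i) → H x v ≤ 0} :=
  padded_saa_product_support_general μ d ξ hξ Ξi D L γ hL hγ H hLip N ξj hmeas hindep hident M net
    hM hcover η hη
end

section
/- Let $W \in \mathbb{R}^{m_2 \times n_2}$, $T \in \mathbb{R}^{m_2 \times n_1}$ be fixed matrices, $h : \Xi \to \mathbb{R}^{m_2}$ measurable, and let $E^W$ be the (finite) set of extreme points of $\bar P = \{\alpha \in \mathbb{R}_+^{m_2} : e^T\alpha = 1, W^T\alpha = 0\}$. Fix $\gamma > 0$, let $\xi^1,\dots,\xi^N$ be i.i.d. copies of $\bm{\xi}$, and define $\tilde\eta(\gamma) = \min_{\alpha \in E^W} \mathbb{P}\big(\alpha^T h(\bm{\xi}) \geq \operatorname{ess\,sup}[\alpha^T h(\bm{\xi})] - \gamma\big)$. Let $\tilde X_{N,\gamma} = \{x \in X : \alpha^T(h(\xi^j) - Tx) + \gamma \leq 0 \ \forall \alpha \in E^W, j \in [N]\}$ and $X^{\mathrm{Fea}} = \{x \in X : \alpha^T T x \geq \operatorname{ess\,sup}[\alpha^T h(\bm{\xi})] \ \forall \alpha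 \in E^W\}$. Then $\mathbb{P}^N(\tilde X_{N,\gamma} \subseteq X^{\mathrm{Fea}}) \geq 1 - |E^W|(1 - \tilde\eta(\gamma))^N$. -/
open MeasureTheory ProbabilityTheory
open scoped ENNReal

/-!
If `x` satisfies the padded sampled constraints but `s α > αᵀTx` for some `α ∈ E^W`, then every
sample has `αᵀh(ξʲ) ≤ αᵀTx - γ < s α - γ`. For fixed `α` all `N` independent samples land in this
bad set with probability at most `(1 - η̃(γ))^N`, and a union bound over the finite set `E^W` finishes.
-/

namespace ProbabilityTheory

variable {Ω E ι : Type*} [MeasurableSpace Ω] [MeasurableSpace E] [Fintype ι] {μ : Measure Ω}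
  {ξ : Ω → E} {ξs : ι → Ω → E}

theorem iIndepFun.measure_iInter_preimage_eq_pow (hindep : iIndepFun ξs μ)
    (hmeas : ∀ j, AEMeasurable (ξs j) μ) (hξ : AEMeasurable ξ μ)
    (hident : ∀ j, μ.map (ξs j) = μ.map ξ) {S : Set E} (hS : MeasurableSet S) :
    μ (⋂ j, ξs j ⁻¹' S) = μ (ξ ⁻¹' S) ^ Fintype.card ι := by
  have hprod := hindep.measure_inter_preimage_eq_mul Finset.univ (fun _ _ => hS)
  simp only [Finset.mem_univ, Set.iInter_true] at hprod
  rw [hprod, ← Finset.card_univ, ← Finset.prod_const,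
    ← Measure.map_apply₀ hξ hS.nullMeasurableSet]
  refine Finset.prod_congr rfl fun j _ => ?_
  rw [← hident j, Measure.map_apply₀ (hmeas j) hS.nullMeasurableSet]

theorem iIndepFun.measure_biUnion_iInter_preimage_le {κ : Type*} (hindep : iIndepFun ξs μ)
    (hmeas : ∀ j, AEMeasurable (ξs j) μ) (hξ : AEMeasurable ξ μ)
    (hident : ∀ j, μ.map (ξs j) = μ.map ξ) {A : Set κ} (hA : A.Finite) {S : κ → Set E}
    (hS : ∀ a ∈ A, MeasurableSet (S a)) {p : ℝ≥0∞} (hp : ∀ a ∈ A, μ (ξ ⁻¹' S a) ≤ p) :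
    μ (⋃ a ∈ A, ⋂ j, ξs j ⁻¹' S a) ≤ A.ncard * p ^ Fintype.card ι := by
  calc μ (⋃ a ∈ A, ⋂ j, ξs j ⁻¹' S a)
      = μ (⋃ a ∈ hA.toFinset, ⋂ j, ξs j ⁻¹' S a) := by simp only [Set.Finite.mem_toFinset]
    _ ≤ ∑ a ∈ hA.toFinset, μ (⋂ j, ξs j ⁻¹' S a) := measure_biUnion_finset_le _ _
    _ ≤ ∑ _a ∈ hA.toFinset, p ^ Fintype.card ι := by
        refine Finset.sum_le_sum fun a ha => ?_
        rw [hA.mem_toFinset] at ha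
        rw [hindep.measure_iInter_preimage_eq_pow hmeas hξ hident (hS a ha)]
        exact pow_le_pow_left' (hp a ha) _
    _ = A.ncard * p ^ Fintype.card ι := by
        rw [Finset.sum_const, nsmul_eq_mul, Set.ncard_eq_toFinset_card _ hA]

end ProbabilityTheory

theorem EReal.le_of_sub_le_of_add_le {s : EReal} {a b γ : ℝ} (hs : s - γ ≤ a)
    (hab : a + γ ≤ b) : s ≤ b :=
  calc s ≤ a + γ := (EReal.sub_le_iff_le_add (.inl (EReal.coe_ne_bot γ))
          (.inl (EReal.coe_ne_top γ))).mp hs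
    _ ≤ b := mod_cast hab

theorem padded_saa_random_rhs_general
    {Ω E : Type*} [MeasurableSpace Ω] [MeasurableSpace E]
    (μ : Measure Ω) [IsProbabilityMeasure μ]
    (m2 n1 : ℕ) (T : Matrix (Fin m2) (Fin n1) ℝ)
    (h : E → (Fin m2 → ℝ)) (hh : Measurable h)
    (ξ : Ω → E) (hξ : Measurable ξ)
    (X : Set (Fin n1 → ℝ))
    (EW : Set (Fin m2 → ℝ))
    (hfin : EW.Finite)
    (γ : ℝ)
    (N : ℕ) (ξj : Fin N → Ω → E) (hmeas : ∀ j, Measurable (ξj j))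
    (hindep : iIndepFun ξj μ)
    (hident : ∀ j, Measure.map (ξj j) μ = Measure.map ξ μ)
    (s : (Fin m2 → ℝ) → EReal)
    (ηt : ℝ≥0∞)
    (hηt : ηt = ⨅ α ∈ EW,
      μ {ω | s α - (γ : EReal) ≤ ((∑ i, α i * h (ξ ω) i : ℝ) : EReal)}) :
    1 - (EW.ncard : ℝ≥0∞) * (1 - ηt) ^ N ≤
      μ {ω | ∀ x ∈ X,
        (∀ α ∈ EW, ∀ j, (∑ i, α i * (h (ξj j ω) i - T.mulVec x i)) + γ ≤ 0) →
          ∀ α ∈ EW, s α ≤ ((∑ i, α i * T.mulVec x i : ℝ) : EReal)} := by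
  set good : (Fin m2 → ℝ) → Set E :=
    fun α => {e | s α - (γ : EReal) ≤ ((∑ i, α i * h e i : ℝ) : EReal)}
  have hgood : ∀ α, MeasurableSet (good α) := fun α =>
    measurableSet_le measurable_const (by fun_prop)
  have hbad : ∀ α ∈ EW, μ (ξ ⁻¹' (good α)ᶜ) ≤ 1 - ηt := fun α hα => by
    rw [Set.preimage_compl, prob_compl_eq_one_sub (hξ (hgood α))]
    exact tsub_le_tsub_left (hηt ▸ biInf_le _ hα) 1
  set B := ⋃ α ∈ EW, ⋂ j, ξj j ⁻¹' (good α)ᶜ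
  have hB : MeasurableSet B := hfin.measurableSet_biUnion fun α _ =>
    .iInter fun j => hmeas j (hgood α).compl
  have hμB : μ B ≤ EW.ncard * (1 - ηt) ^ N := by
    have := hindep.measure_biUnion_iInter_preimage_le (fun j => (hmeas j).aemeasurable)
      hξ.aemeasurable hident hfin (fun α _ => (hgood α).compl) hbad
    rwa [Fintype.card_fin] at this
  refine le_trans ?_ (measure_mono (s := Bᶜ) fun ω hω x _ hpad α hα => ?_)
  · calc 1 - (EW.ncard : ℝ≥0∞) * (1 - ηt) ^ N ≤ 1 - μ B := tsub_le_tsub_left hμB 1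
      _ = μ Bᶜ := (prob_compl_eq_one_sub hB).symm
  obtain ⟨j, hj⟩ : ∃ j, ξj j ω ∈ good α := by
    have : ω ∉ ⋂ j, ξj j ⁻¹' (good α)ᶜ := fun hmem => hω (Set.mem_biUnion hα hmem)
    simpa using this
  have hpadj := hpad α hα j
  simp only [mul_sub, Finset.sum_sub_distrib] at hpadj
  exact EReal.le_of_sub_le_of_add_le hj (by linarith)

/-- Theorem 7 (padded SAA with random right-hand side): with probability at least
`1 - |E^W| (1 - η̃(γ))^N`, every `x` feasible for the `γ`-padded sampled constraints
(expressed via the extreme points `E^W` of the dual feasibility polytope) satisfies the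
almost-sure feasibility condition `αᵀTx ≥ ess sup αᵀh(ξ)` for all `α ∈ E^W`. -/
theorem padded_saa_random_rhs
    {Ω E : Type*} [MeasurableSpace Ω] [MeasurableSpace E]
    (μ : Measure Ω) [IsProbabilityMeasure μ]
    (m2 n2 n1 : ℕ) (W : Matrix (Fin m2) (Fin n2) ℝ) (T : Matrix (Fin m2) (Fin n1) ℝ)
    (h : E → (Fin m2 → ℝ)) (hh : Measurable h)
    (ξ : Ω → E) (hξ : Measurable ξ)
    (X : Set (Fin n1 → ℝ))
    (EW : Set (Fin m2 → ℝ))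
    (hEW : EW = Set.extremePoints ℝ
      {α | (∀ i, 0 ≤ α i) ∧ (∑ i, α i) = 1 ∧ W.transpose.mulVec α = 0})
    (hfin : EW.Finite)
    (γ : ℝ) (hγ : 0 < γ)
    (N : ℕ) (ξj : Fin N → Ω → E) (hmeas : ∀ j, Measurable (ξj j))
    (hindep : iIndepFun ξj μ)
    (hident : ∀ j, Measure.map (ξj j) μ = Measure.map ξ μ)
    (s : (Fin m2 → ℝ) → EReal)
    (hs : ∀ α, s α = essSup (fun ω => ((∑ i, α i * h (ξ ω) i : ℝ) : EReal)) μ)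
    (ηt : ℝ≥0∞)
    (hηt : ηt = ⨅ α ∈ EW,
      μ {ω | s α - (γ : EReal) ≤ ((∑ i, α i * h (ξ ω) i : ℝ) : EReal)}) :
    1 - (EW.ncard : ℝ≥0∞) * (1 - ηt) ^ N ≤
      μ {ω | ∀ x ∈ X,
        (∀ α ∈ EW, ∀ j, (∑ i, α i * (h (ξj j ω) i - T.mulVec x i)) + γ ≤ 0) →
          ∀ α ∈ EW, s α ≤ ((∑ i, α i * T.mulVec x i : ℝ) : EReal)} :=
  padded_saa_random_rhs_general μ m2 n1 T h hh ξ hξ X EW hfin γ N ξj hmeas hindep hident s ηt hηt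
end
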